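/- For all integers l and m with (l,m) ≠ (0,0), the double coset SL₂(ℤ)·diag(l,m)·SL₂(ℤ) (inside the 2×2 integer matrices) is exactly the set of matrices ((a,b),(c,d)) with integer entries satisfying ad − bc = l·m and gcd(a,b,c,d) = gcd(l,m). -/

import Mathlib

open Matrix

namespace SNFAux

abbrev M2 := Matrix (Fin 2) (Fin 2) ℤ
abbrev SL2 := Matrix.SpecialLinearGroup (Fin 2) ℤ

def gmat (X : M2) : ℕ := Int.gcd (Int.gcd (X 0 0) (X 0 1)) (Int.gcd (X 1 0) (X 1 1))

lemma gmat_dvd (X : M2) (i j : Fin 2) : (gmat X : ℤ) ∣ X i j := by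
  have h1 : (gmat X : ℤ) ∣ (Int.gcd (X 0 0) (X 0 1) : ℤ) := Int.gcd_dvd_left _ _
  have h2 : (gmat X : ℤ) ∣ (Int.gcd (X 1 0) (X 1 1) : ℤ) := Int.gcd_dvd_right _ _
  fin_cases i <;> fin_cases j
  · exact h1.trans (Int.gcd_dvd_left _ _)
  · exact h1.trans (Int.gcd_dvd_right _ _)
  · exact h2.trans (Int.gcd_dvd_left _ _)
  · exact h2.trans (Int.gcd_dvd_right _ _)

lemma dvd_gmat (X : M2) (k : ℤ) (h : ∀ i j, k ∣ X i j) : k ∣ (gmat X : ℤ) :=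
  Int.dvd_coe_gcd (Int.dvd_coe_gcd (h 0 0) (h 0 1)) (Int.dvd_coe_gcd (h 1 0) (h 1 1))

lemma gmat_dvd_gmat_of_dvd {X Y : M2} (h : ∀ i j, (gmat X : ℤ) ∣ Y i j) :
    gmat X ∣ gmat Y := Int.ofNat_dvd.mp (dvd_gmat Y _ h)

lemma gmat_mul_left (A : SL2) (X : M2) : gmat ((A : M2) * X) = gmat X := by
  apply Nat.dvd_antisymm
  · apply gmat_dvd_gmat_of_dvd
    intro i j
    have key : ((A⁻¹ : SL2) : M2) * ((A : M2) * X) = X := by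
      rw [← Matrix.mul_assoc, ← Matrix.SpecialLinearGroup.coe_mul, inv_mul_cancel,
        Matrix.SpecialLinearGroup.coe_one, Matrix.one_mul]
    conv_rhs => rw [← key]
    rw [Matrix.mul_apply, Fin.sum_univ_two]
    exact dvd_add (Dvd.dvd.mul_left (gmat_dvd _ 0 j) _) (Dvd.dvd.mul_left (gmat_dvd _ 1 j) _)
  · apply gmat_dvd_gmat_of_dvd
    intro i j
    rw [Matrix.mul_apply, Fin.sum_univ_two]
    exact dvd_add (Dvd.dvd.mul_left (gmat_dvd X 0 j) _) (Dvd.dvd.mul_left (gmat_dvd X 1 j) _)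

lemma gmat_mul_right (X : M2) (B : SL2) : gmat (X * (B : M2)) = gmat X := by
  apply Nat.dvd_antisymm
  · apply gmat_dvd_gmat_of_dvd
    intro i j
    have key : (X * (B : M2)) * ((B⁻¹ : SL2) : M2) = X := by
      rw [Matrix.mul_assoc, ← Matrix.SpecialLinearGroup.coe_mul, mul_inv_cancel,
        Matrix.SpecialLinearGroup.coe_one, Matrix.mul_one]
    conv_rhs => rw [← key]
    rw [Matrix.mul_apply, Fin.sum_univ_two]
    exact dvd_add (Dvd.dvd.mul_right (gmat_dvd _ i 0) _) (Dvd.dvd.mul_right (gmat_dvd _ i 1) _)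
  · apply gmat_dvd_gmat_of_dvd
    intro i j
    rw [Matrix.mul_apply, Fin.sum_univ_two]
    exact dvd_add (Dvd.dvd.mul_right (gmat_dvd X i 0) _) (Dvd.dvd.mul_right (gmat_dvd X i 1) _)

lemma rowClear (X : M2) : ∃ A : SL2,
    ((A : M2) * X) 0 0 = (Int.gcd (X 0 0) (X 1 0) : ℤ) ∧ ((A : M2) * X) 1 0 = 0 := by
  by_cases hg : Int.gcd (X 0 0) (X 1 0) = 0
  · obtain ⟨h1, h2⟩ := Int.gcd_eq_zero_iff.mp hg
    refine ⟨1, ?_, ?_⟩ <;> simp [hg, h1, h2]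
  · obtain ⟨u, v, huv⟩ : ∃ u v : ℤ, (Int.gcd (X 0 0) (X 1 0) : ℤ) = X 0 0 * u + X 1 0 * v :=
      ⟨_, _, Int.gcd_eq_gcd_ab _ _⟩
    obtain ⟨a', ha'⟩ : (Int.gcd (X 0 0) (X 1 0) : ℤ) ∣ X 0 0 := Int.gcd_dvd_left _ _
    obtain ⟨c', hc'⟩ : (Int.gcd (X 0 0) (X 1 0) : ℤ) ∣ X 1 0 := Int.gcd_dvd_right _ _
    have hgz : (Int.gcd (X 0 0) (X 1 0) : ℤ) ≠ 0 := Int.natCast_ne_zero.mpr hg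
    have hdet : (!![u, v; -c', a'] : M2).det = 1 := by
      rw [Matrix.det_fin_two_of]
      apply mul_left_cancel₀ hgz
      linear_combination (-u) * ha' + (-v) * hc' - huv
    refine ⟨⟨!![u, v; -c', a'], hdet⟩, ?_, ?_⟩
    · show (!![u, v; -c', a'] * X) 0 0 = _
      rw [Matrix.mul_apply, Fin.sum_univ_two]
      simp only [Matrix.cons_val', Matrix.cons_val_zero, Matrix.cons_val_one, Matrix.head_cons,
        Matrix.empty_val', Matrix.cons_val_fin_one, Matrix.head_fin_const, Matrix.of_apply]
      linear_combination -huv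
    · show (!![u, v; -c', a'] * X) 1 0 = 0
      rw [Matrix.mul_apply, Fin.sum_univ_two]
      simp only [Matrix.cons_val', Matrix.cons_val_zero, Matrix.cons_val_one, Matrix.head_cons,
        Matrix.empty_val', Matrix.cons_val_fin_one, Matrix.head_fin_const, Matrix.of_apply]
      linear_combination (-c') * ha' + a' * hc'

lemma colClear (X : M2) : ∃ B : SL2,
    (X * (B : M2)) 0 0 = (Int.gcd (X 0 0) (X 0 1) : ℤ) ∧ (X * (B : M2)) 0 1 = 0 := by
  obtain ⟨A, h1, h2⟩ := rowClear Xᵀ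
  refine ⟨⟨(A : M2)ᵀ, by rw [Matrix.det_transpose]; exact A.2⟩, ?_, ?_⟩
  · show (X * (A : M2)ᵀ) 0 0 = _
    have h : X * (A : M2)ᵀ = ((A : M2) * Xᵀ)ᵀ := by
      rw [Matrix.transpose_mul, Matrix.transpose_transpose]
    rw [h]
    simpa using h1
  · show (X * (A : M2)ᵀ) 0 1 = 0
    have h : X * (A : M2)ᵀ = ((A : M2) * Xᵀ)ᵀ := by
      rw [Matrix.transpose_mul, Matrix.transpose_transpose]
    rw [h]
    simpa using h2

lemma gmat_diag_of_dvd (n : ℕ) (d : ℤ) (h : (n:ℤ) ∣ d) :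
    gmat (diagonal ![(n:ℤ), d]) = n := by
  simp [gmat, Matrix.diagonal, Int.gcd, Int.natAbs_abs]
  exact Nat.gcd_eq_left (Int.natCast_dvd.mp h)

lemma gmat_diag (l m : ℤ) : gmat (diagonal ![l, m]) = Int.gcd l m := by
  simp [gmat, Matrix.diagonal, Int.gcd, Int.natAbs_abs]

lemma snf_aux : ∀ n : ℕ, ∀ X : M2, Int.gcd (X 0 0) (X 1 0) = n → n ≠ 0 →
    ∃ (A B : SL2) (d : ℤ), (A : M2) * X * (B : M2) = diagonal ![(gmat X : ℤ), d] := by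
  intro n
  induction n using Nat.strong_induction_on with
  | _ n IH =>
    intro X hX hn
    obtain ⟨A₁, hY00, hY10⟩ := rowClear X
    rw [hX] at hY00
    set Y := (A₁ : M2) * X with hYdef
    by_cases hbd : (n : ℤ) ∣ Y 0 1 ∧ (n : ℤ) ∣ Y 1 1
    · -- finished case
      obtain ⟨⟨b₀, hb₀⟩, hd⟩ := hbd
      have hdetB : (!![1, -b₀; 0, 1] : M2).det = 1 := by
        rw [Matrix.det_fin_two_of]; ring
      set B₀ : SL2 := ⟨!![1, -b₀; 0, 1], hdetB⟩ with hB₀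
      have hYB : Y * (B₀ : M2) = diagonal ![(n : ℤ), Y 1 1] := by
        ext i j
        rw [Matrix.mul_apply, Fin.sum_univ_two]
        fin_cases i <;> fin_cases j <;>
          simp [hB₀, Matrix.diagonal, hY00, hY10, hb₀]
      have hgn : gmat X = n := by
        have h1 : gmat X = gmat (Y * (B₀ : M2)) := by
          rw [hYdef] at *
          rw [gmat_mul_right, gmat_mul_left]
        rw [h1, hYB, gmat_diag_of_dvd n _ hd]
      refine ⟨A₁, B₀, Y 1 1, ?_⟩
      rw [hgn, ← hYdef]
      exact hYB
    · -- recursive case: build W = A₂ * X with W 0 0 = n, W 1 0 = 0, ¬ n ∣ W 0 1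
      have hW : ∃ A₂ : SL2, ((A₂ : M2) * X) 0 0 = (n : ℤ) ∧ ((A₂ : M2) * X) 1 0 = 0 ∧
          ¬ (n : ℤ) ∣ ((A₂ : M2) * X) 0 1 := by
        by_cases hb : (n : ℤ) ∣ Y 0 1
        · have hd : ¬ (n : ℤ) ∣ Y 1 1 := fun hd => hbd ⟨hb, hd⟩
          have hdetE : (!![1, 1; 0, 1] : M2).det = 1 := by
            rw [Matrix.det_fin_two_of]; ring
          set E : SL2 := ⟨!![1, 1; 0, 1], hdetE⟩ with hE
          refine ⟨E * A₁, ?_, ?_, ?_⟩ <;>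
            rw [Matrix.SpecialLinearGroup.coe_mul, Matrix.mul_assoc, ← hYdef]
          · rw [Matrix.mul_apply, Fin.sum_univ_two]
            simp [hE, hY00, hY10]
          · rw [Matrix.mul_apply, Fin.sum_univ_two]
            simp [hE, hY10]
          · rw [Matrix.mul_apply, Fin.sum_univ_two]
            simp only [hE]
            simp only [Matrix.cons_val', Matrix.cons_val_zero, Matrix.cons_val_one,
              Matrix.head_cons, Matrix.empty_val', Matrix.cons_val_fin_one,
              Matrix.head_fin_const, Matrix.of_apply, one_mul]
            intro hsum
            exact hd ((Int.dvd_add_right hb).mp hsum)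
        · exact ⟨A₁, hY00, hY10, hb⟩
      obtain ⟨A₂, hW00, hW10, hWnd⟩ := hW
      set W := (A₂ : M2) * X with hWdef
      obtain ⟨B₂, hZ00, hZ01⟩ := colClear W
      set Z := W * (B₂ : M2) with hZdef
      set k : ℕ := Int.gcd (W 0 0) (W 0 1) with hk
      have hkpos : k ≠ 0 := by
        rw [hk]
        intro h0
        exact hn (by simpa [hW00, Int.natCast_eq_zero] using (Int.gcd_eq_zero_iff.mp h0).1)
      have hkltn : k < n := by
        have h1 : k ∣ n := by
          have : (k : ℤ) ∣ (n : ℤ) := hk ▸ hW00 ▸ Int.gcd_dvd_left (W 0 0) (W 0 1)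
          exact_mod_cast this
        have h2 : k ≠ n := by
          intro he
          apply hWnd
          have : (k : ℤ) ∣ W 0 1 := hk ▸ Int.gcd_dvd_right (W 0 0) (W 0 1)
          rwa [he] at this
        exact lt_of_le_of_ne (Nat.le_of_dvd (Nat.pos_of_ne_zero hn) h1) h2
      have hZcol : Int.gcd (Z 0 0) (Z 1 0) ∣ k := by
        have : (Int.gcd (Z 0 0) (Z 1 0) : ℤ) ∣ (k : ℤ) := hZ00 ▸ Int.gcd_dvd_left (Z 0 0) (Z 1 0)
        exact_mod_cast this
      set n' : ℕ := Int.gcd (Z 0 0) (Z 1 0) with hn'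
      have hn'ne : n' ≠ 0 := by
        intro h0
        have := (Int.gcd_eq_zero_iff.mp (hn' ▸ h0)).1
        rw [hZ00] at this
        exact hkpos (by exact_mod_cast this)
      have hn'lt : n' < n := lt_of_le_of_lt (Nat.le_of_dvd (Nat.pos_of_ne_zero hkpos) hZcol) hkltn
      obtain ⟨A₃, B₃, d₃, hfin⟩ := IH n' hn'lt Z rfl hn'ne
      have hgZ : gmat Z = gmat X := by
        rw [hZdef, gmat_mul_right, hWdef, gmat_mul_left]
      refine ⟨A₃ * A₂, B₂ * B₃, d₃, ?_⟩
      rw [Matrix.SpecialLinearGroup.coe_mul, Matrix.SpecialLinearGroup.coe_mul]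
      rw [← hgZ]
      calc (A₃ : M2) * (A₂ : M2) * X * ((B₂ : M2) * (B₃ : M2))
          = (A₃ : M2) * Z * (B₃ : M2) := by rw [hZdef, hWdef]; noncomm_ring
        _ = diagonal ![(gmat Z : ℤ), d₃] := hfin

lemma snf (X : M2) (hX : gmat X ≠ 0) :
    ∃ (A B : SL2) (d : ℤ), (A : M2) * X * (B : M2) = diagonal ![(gmat X : ℤ), d] := by
  by_cases h : Int.gcd (X 0 0) (X 1 0) = 0
  · obtain ⟨h1, h2⟩ := Int.gcd_eq_zero_iff.mp h
    have hdetS : (!![0, -1; 1, 0] : M2).det = 1 := by rw [Matrix.det_fin_two_of]; ring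
    set σ : SL2 := ⟨!![0, -1; 1, 0], hdetS⟩ with hσ
    set X' := X * (σ : M2) with hX'def
    have hX'00 : X' 0 0 = X 0 1 := by
      rw [hX'def, Matrix.mul_apply, Fin.sum_univ_two]; simp [hσ]
    have hX'10 : X' 1 0 = X 1 1 := by
      rw [hX'def, Matrix.mul_apply, Fin.sum_univ_two]; simp [hσ]
    have hne : Int.gcd (X' 0 0) (X' 1 0) ≠ 0 := by
      rw [hX'00, hX'10]
      intro h0
      obtain ⟨h3, h4⟩ := Int.gcd_eq_zero_iff.mp h0
      apply hX
      simp [gmat, h1, h2, h3, h4]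
    obtain ⟨A, B, d, hd⟩ := snf_aux _ X' rfl hne
    have hg : gmat X' = gmat X := by rw [hX'def, gmat_mul_right]
    refine ⟨A, σ * B, d, ?_⟩
    rw [Matrix.SpecialLinearGroup.coe_mul, ← hg, ← hd, hX'def]
    noncomm_ring
  · exact snf_aux _ X rfl h

lemma det_diag_two (a b : ℤ) : (diagonal ![a, b]).det = a * b := by
  rw [Matrix.det_diagonal, Fin.prod_univ_two]
  simp

end SNFAux

open SNFAux in
/-- For all integers `l` and `m` with `(l,m) ≠ (0,0)`, the double coset
`SL₂(ℤ) · diag(l,m) · SL₂(ℤ)` inside the `2×2` integer matrices is exactly the set of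
integer matrices `((a,b),(c,d))` with `a*d - b*c = l*m` and `gcd(a,b,c,d) = gcd(l,m)`. -/
theorem doubleCoset_diag_eq (l m : ℤ) (h : (l, m) ≠ (0, 0)) :
    {X : Matrix (Fin 2) (Fin 2) ℤ |
      ∃ A B : Matrix.SpecialLinearGroup (Fin 2) ℤ,
        X = (A : Matrix (Fin 2) (Fin 2) ℤ) * Matrix.diagonal ![l, m] *
          (B : Matrix (Fin 2) (Fin 2) ℤ)} =
    {X : Matrix (Fin 2) (Fin 2) ℤ |
      X.det = l * m ∧
      Int.gcd (Int.gcd (X 0 0) (X 0 1)) (Int.gcd (X 1 0) (X 1 1)) = Int.gcd l m} := by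
  have hg0 : Int.gcd l m ≠ 0 := by
    intro h0
    obtain ⟨h1, h2⟩ := Int.gcd_eq_zero_iff.mp h0
    exact h (by rw [h1, h2])
  ext X
  simp only [Set.mem_setOf_eq]
  constructor
  · rintro ⟨A, B, rfl⟩
    constructor
    · rw [Matrix.det_mul, Matrix.det_mul, Matrix.SpecialLinearGroup.det_coe,
        Matrix.SpecialLinearGroup.det_coe, det_diag_two]
      ring
    · show gmat _ = Int.gcd l m
      rw [Matrix.mul_assoc, gmat_mul_left, gmat_mul_right, gmat_diag]
  · rintro ⟨hdet, hgcd⟩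
    have hgX : gmat X = Int.gcd l m := hgcd
    have hXne : gmat X ≠ 0 := by rw [hgX]; exact hg0
    have hDg : gmat (Matrix.diagonal ![l, m]) = Int.gcd l m := gmat_diag l m
    have hDne : gmat (Matrix.diagonal ![l, m]) ≠ 0 := by rw [hDg]; exact hg0
    obtain ⟨A₁, B₁, d₁, hd₁⟩ := snf X hXne
    obtain ⟨A₂, B₂, d₂, hd₂⟩ := snf (Matrix.diagonal ![l, m]) hDne
    rw [hgX] at hd₁
    rw [hDg] at hd₂
    -- determinants: g * d₁ = l * m = g * d₂
    have hdet₁ : (Int.gcd l m : ℤ) * d₁ = l * m := by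
      have := congrArg Matrix.det hd₁
      rw [Matrix.det_mul, Matrix.det_mul, Matrix.SpecialLinearGroup.det_coe,
        Matrix.SpecialLinearGroup.det_coe, det_diag_two, hdet] at this
      linarith
    have hdet₂ : (Int.gcd l m : ℤ) * d₂ = l * m := by
      have := congrArg Matrix.det hd₂
      rw [Matrix.det_mul, Matrix.det_mul, Matrix.SpecialLinearGroup.det_coe,
        Matrix.SpecialLinearGroup.det_coe, det_diag_two, det_diag_two] at this
      linarith
    have hd12 : d₁ = d₂ := by
      have hgz : (Int.gcd l m : ℤ) ≠ 0 := Int.natCast_ne_zero.mpr hg0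
      apply mul_left_cancel₀ hgz
      rw [hdet₁, hdet₂]
    rw [hd12, ← hd₂] at hd₁
    refine ⟨A₁⁻¹ * A₂, B₂ * B₁⁻¹, ?_⟩
    rw [Matrix.SpecialLinearGroup.coe_mul, Matrix.SpecialLinearGroup.coe_mul]
    have e1 : ((A₁⁻¹ : SL2) : M2) * ((A₂ : M2)) * Matrix.diagonal ![l, m] *
        (((B₂ : M2)) * ((B₁⁻¹ : SL2) : M2)) =
        ((A₁⁻¹ : SL2) : M2) * ((A₂ : M2) * Matrix.diagonal ![l, m] * (B₂ : M2)) *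
        ((B₁⁻¹ : SL2) : M2) := by noncomm_ring
    rw [e1, ← hd₁]
    rw [show ((A₁⁻¹ : SL2) : M2) * ((A₁ : M2) * X * (B₁ : M2)) * ((B₁⁻¹ : SL2) : M2) =
      (((A₁⁻¹ : SL2) : M2) * (A₁ : M2)) * X * ((B₁ : M2) * ((B₁⁻¹ : SL2) : M2)) by noncomm_ring]
    rw [← Matrix.SpecialLinearGroup.coe_mul, ← Matrix.SpecialLinearGroup.coe_mul,
      inv_mul_cancel, mul_inv_cancel, Matrix.SpecialLinearGroup.coe_one, Matrix.one_mul,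
      Matrix.mul_one]
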